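/- arXiv:2509.03096 — 6 statements merged into one kernel-verified Lean document; each statement's English description precedes it below -/
import Mathlib

section
/- For each fixed α ∈ (0,1), the bioreactor yield is strictly decreasing in the dilution rate: if 0 < d₁ < d₂, both d₁ and d₂ are in the domain of ψα⁻¹, and ψα⁻¹(d₂) < s_in (hence also ψα⁻¹(d₁) < s_in), then P_yield(α,d₂) < P_yield(α,d₁). -/
/-- Inverse of the Monod bacterial growth rate: `φ⁻¹(y) = ks·y/(φmax − y)`. -/
noncomputable def phiInv (φmax ks y : ℝ) : ℝ := ks * y / (φmax - y)

/-- Inverse of the Droop algal growth rate: `μ⁻¹(d) = qmin·μmax/(μmax − d)`. -/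
noncomputable def muInv (μmax qmin d : ℝ) : ℝ := qmin * μmax / (μmax - d)

/-- Inverse of the vitamin uptake rate: `ρ⁻¹(w) = kv·w/(ρmax − w)`. -/
noncomputable def rhoInv (ρmax kv w : ℝ) : ℝ := kv * w / (ρmax - w)

/-- `ψα⁻¹(d) = φ⁻¹(d/(1−α)) + ρ⁻¹(d·μ⁻¹(d))/(α·β·γ)`. -/
noncomputable def psiInv (φmax ks ρmax kv μmax qmin β γ α d : ℝ) : ℝ :=
  phiInv φmax ks (d / (1 - α)) +
    rhoInv ρmax kv (d * muInv μmax qmin d) / (α * β * γ)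

/-- `d` is in the domain of `ψα⁻¹`: `d/(1−α) < φmax`, `d < μmax`, `d·μ⁻¹(d) < ρmax`. -/
def inDom (φmax ρmax μmax qmin α d : ℝ) : Prop :=
  d / (1 - α) < φmax ∧ d < μmax ∧ d * muInv μmax qmin d < ρmax

/-- Bioreactor yield `P_yield(α,d) = α·β·γ·(s_in − ψα⁻¹(d))/(s_in·μ⁻¹(d))`. -/
noncomputable def Pyield (φmax ks ρmax kv μmax qmin β γ s_in α d : ℝ) : ℝ :=
  α * β * γ * (s_in - psiInv φmax ks ρmax kv μmax qmin β γ α d) /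
    (s_in * muInv μmax qmin d)

/-
Every ingredient of `ψα⁻¹` is a Michaelis–Menten type fraction `k·y/(c − y)`, strictly increasing
below its pole, so `ψα⁻¹` and `μ⁻¹ > 0` are strictly increasing on the domain. Hence in
`P_yield` the numerator `s_in − ψα⁻¹(d)` decreases while staying positive and the denominator
increases, and the yield strictly decreases.
-/

open Set

lemma strictMonoOn_mul_div_sub {k c : ℝ} (hk : 0 < k) (hc : 0 < c) :
    StrictMonoOn (fun y => k * y / (c - y)) (Iio c) := by
  intro y₁ hy₁ y₂ hy₂ h
  rw [mem_Iio] at hy₁ hy₂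
  rw [div_lt_div_iff₀ (sub_pos.2 hy₁) (sub_pos.2 hy₂)]
  nlinarith [mul_pos (mul_pos hk hc) (sub_pos.2 h)]

section Monotonicity

variable {φmax ks ρmax kv μmax qmin β γ α : ℝ}

lemma phiInv_strictMonoOn (hφ : 0 < φmax) (hks : 0 < ks) :
    StrictMonoOn (phiInv φmax ks) (Iio φmax) :=
  strictMonoOn_mul_div_sub hks hφ

lemma rhoInv_strictMonoOn (hρ : 0 < ρmax) (hkv : 0 < kv) :
    StrictMonoOn (rhoInv ρmax kv) (Iio ρmax) :=
  strictMonoOn_mul_div_sub hkv hρ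

lemma muInv_pos (hμ : 0 < μmax) (hq : 0 < qmin) {d : ℝ} (hd : d < μmax) :
    0 < muInv μmax qmin d :=
  div_pos (mul_pos hq hμ) (sub_pos.2 hd)

lemma muInv_strictMonoOn (hμ : 0 < μmax) (hq : 0 < qmin) :
    StrictMonoOn (muInv μmax qmin) (Iio μmax) := fun _ _ _ hd₂ h =>
  div_lt_div_of_pos_left (mul_pos hq hμ) (sub_pos.2 hd₂) (sub_lt_sub_left h μmax)

lemma mul_muInv_strictMonoOn (hμ : 0 < μmax) (hq : 0 < qmin) :
    StrictMonoOn (fun d => d * muInv μmax qmin d) (Iio μmax) := by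
  have h : (fun d => d * muInv μmax qmin d) = fun d => qmin * μmax * d / (μmax - d) := by
    funext d
    rw [muInv, mul_div_assoc', mul_comm d]
  rw [h]
  exact strictMonoOn_mul_div_sub (mul_pos hq hμ) hμ

lemma psiInv_strictMonoOn (hφ : 0 < φmax) (hks : 0 < ks) (hρ : 0 < ρmax) (hkv : 0 < kv)
    (hμ : 0 < μmax) (hq : 0 < qmin) (hβ : 0 < β) (hγ : 0 < γ) (hα0 : 0 < α) (hα1 : α < 1) :
    StrictMonoOn (psiInv φmax ks ρmax kv μmax qmin β γ α) {d | inDom φmax ρmax μmax qmin α d} := by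
  rintro d₁ ⟨hφ₁, hμ₁, hρ₁⟩ d₂ ⟨hφ₂, hμ₂, hρ₂⟩ h
  have hphi : phiInv φmax ks (d₁ / (1 - α)) < phiInv φmax ks (d₂ / (1 - α)) :=
    phiInv_strictMonoOn hφ hks hφ₁ hφ₂ (div_lt_div_of_pos_right h (sub_pos.2 hα1))
  have hrho : rhoInv ρmax kv (d₁ * muInv μmax qmin d₁) < rhoInv ρmax kv (d₂ * muInv μmax qmin d₂) :=
    rhoInv_strictMonoOn hρ hkv hρ₁ hρ₂ (mul_muInv_strictMonoOn hμ hq hμ₁ hμ₂ h)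
  unfold psiInv
  gcongr

end Monotonicity

theorem Pyield_strictAnti_general (φmax ks ρmax kv μmax qmin β γ s_in : ℝ)
    (hφ : 0 < φmax) (hks : 0 < ks) (hρ : 0 < ρmax) (hkv : 0 < kv)
    (hμ : 0 < μmax) (hq : 0 < qmin) (hβ : 0 < β) (hγ : 0 < γ) (hs : 0 < s_in)
    (α : ℝ) (hα0 : 0 < α) (hα1 : α < 1)
    (d₁ d₂ : ℝ) (h₁₂ : d₁ < d₂)
    (hdom₁ : inDom φmax ρmax μmax qmin α d₁)
    (hdom₂ : inDom φmax ρmax μmax qmin α d₂)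
    (hfeas : psiInv φmax ks ρmax kv μmax qmin β γ α d₂ < s_in) :
    Pyield φmax ks ρmax kv μmax qmin β γ s_in α d₂ <
      Pyield φmax ks ρmax kv μmax qmin β γ s_in α d₁ := by
  have hψ := psiInv_strictMonoOn hφ hks hρ hkv hμ hq hβ hγ hα0 hα1 hdom₁ hdom₂ h₁₂
  have hμ₁₂ := muInv_strictMonoOn hμ hq hdom₁.2.1 hdom₂.2.1 h₁₂
  have hαβγ : 0 < α * β * γ := by positivity
  apply div_lt_div₀
  · gcongr
  · gcongr
  · exact (mul_pos hαβγ (sub_pos.2 (hψ.trans hfeas))).le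
  · exact mul_pos hs (muInv_pos hμ hq hdom₁.2.1)

/-- for fixed `α ∈ (0,1)`, the yield is strictly decreasing in `d`. -/
theorem Pyield_strictAnti (φmax ks ρmax kv μmax qmin β γ s_in : ℝ)
    (hφ : 0 < φmax) (hks : 0 < ks) (hρ : 0 < ρmax) (hkv : 0 < kv)
    (hμ : 0 < μmax) (hq : 0 < qmin) (hβ : 0 < β) (hγ : 0 < γ) (hs : 0 < s_in)
    (α : ℝ) (hα0 : 0 < α) (hα1 : α < 1)
    (d₁ d₂ : ℝ) (h₁ : 0 < d₁) (h₁₂ : d₁ < d₂)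
    (hdom₁ : inDom φmax ρmax μmax qmin α d₁)
    (hdom₂ : inDom φmax ρmax μmax qmin α d₂)
    (hfeas : psiInv φmax ks ρmax kv μmax qmin β γ α d₂ < s_in) :
    Pyield φmax ks ρmax kv μmax qmin β γ s_in α d₂ <
      Pyield φmax ks ρmax kv μmax qmin β γ s_in α d₁ :=
  Pyield_strictAnti_general φmax ks ρmax kv μmax qmin β γ s_in hφ hks hρ hkv hμ hq hβ hγ hs α hα0
    hα1 d₁ d₂ h₁₂ hdom₁ hdom₂ hfeas
end

section
/- For every α ∈ (0,1) and every d > 0 in the domain of ψα⁻¹ with ψα⁻¹(d) < s_in, the bioreactor yield satisfies the global strict bound P_yield(α,d) < β·γ/qmin; that is, the supremum β·γ/qmin of the yield over the closed parameter region is approached only at the boundary point (α,d) = (1,0) and is not attained at any admissible interior point. -/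
/-!
On its domain `ψα⁻¹` is nonnegative, so the yield is `β·γ/μ⁻¹(d)` times the fraction
`α·(s_in − ψα⁻¹(d))/s_in < 1`; and `μ⁻¹(d) > qmin` as soon as `d > 0`.
-/

lemma phiInv_nonneg {φmax ks y : ℝ} (hks : 0 ≤ ks) (hy : 0 ≤ y) (hyφ : y < φmax) :
    0 ≤ phiInv φmax ks y :=
  div_nonneg (mul_nonneg hks hy) (sub_pos.2 hyφ).le

lemma rhoInv_nonneg {ρmax kv w : ℝ} (hkv : 0 ≤ kv) (hw : 0 ≤ w) (hwρ : w < ρmax) :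
    0 ≤ rhoInv ρmax kv w :=
  div_nonneg (mul_nonneg hkv hw) (sub_pos.2 hwρ).le

lemma muInv_nonneg {μmax qmin d : ℝ} (hq : 0 ≤ qmin) (hd : 0 ≤ d) (hdμ : d < μmax) :
    0 ≤ muInv μmax qmin d :=
  div_nonneg (mul_nonneg hq (hd.trans hdμ.le)) (sub_pos.2 hdμ).le

lemma qmin_lt_muInv {μmax qmin d : ℝ} (hq : 0 < qmin) (hd : 0 < d) (hdμ : d < μmax) :
    qmin < muInv μmax qmin d := by
  rw [muInv, lt_div_iff₀ (sub_pos.2 hdμ)]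
  nlinarith

lemma psiInv_nonneg {φmax ks ρmax kv μmax qmin β γ α d : ℝ} (hks : 0 ≤ ks) (hkv : 0 ≤ kv)
    (hq : 0 ≤ qmin) (hβ : 0 ≤ β) (hγ : 0 ≤ γ) (hα0 : 0 ≤ α) (hα1 : α < 1) (hd : 0 ≤ d)
    (hdom : inDom φmax ρmax μmax qmin α d) :
    0 ≤ psiInv φmax ks ρmax kv μmax qmin β γ α d := by
  obtain ⟨hdφ, hdμ, hdρ⟩ := hdom
  have hM := muInv_nonneg hq hd hdμ
  exact add_nonneg (phiInv_nonneg hks (div_nonneg hd (sub_pos.2 hα1).le) hdφ)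
    (div_nonneg (rhoInv_nonneg hkv (mul_nonneg hd hM) hdρ) (by positivity))

lemma Pyield_eq_mul (φmax ks ρmax kv μmax qmin β γ s_in α d : ℝ) :
    Pyield φmax ks ρmax kv μmax qmin β γ s_in α d =
      β * γ / muInv μmax qmin d *
        (α * (s_in - psiInv φmax ks ρmax kv μmax qmin β γ α d) / s_in) := by
  rw [Pyield]
  ring

lemma mul_sub_div_lt_one {α s ψ : ℝ} (hα0 : 0 ≤ α) (hα1 : α < 1) (hψ : 0 ≤ ψ) (hs : 0 < s) :
    α * (s - ψ) / s < 1 := by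
  rw [div_lt_one hs]
  nlinarith

theorem Pyield_lt_global_sup_general (φmax ks ρmax kv μmax qmin β γ s_in : ℝ)
    (hks : 0 < ks) (hkv : 0 < kv)
    (hq : 0 < qmin) (hβ : 0 < β) (hγ : 0 < γ) (hs : 0 < s_in)
    (α : ℝ) (hα0 : 0 < α) (hα1 : α < 1)
    (d : ℝ) (hd : 0 < d)
    (hdom : inDom φmax ρmax μmax qmin α d) :
    Pyield φmax ks ρmax kv μmax qmin β γ s_in α d < β * γ / qmin := by
  have hqM : qmin < muInv μmax qmin d := qmin_lt_muInv hq hd hdom.2.1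
  have hψ : 0 ≤ psiInv φmax ks ρmax kv μmax qmin β γ α d :=
    psiInv_nonneg hks.le hkv.le hq.le hβ.le hγ.le hα0.le hα1 hd.le hdom
  have hβγ : 0 < β * γ := mul_pos hβ hγ
  calc Pyield φmax ks ρmax kv μmax qmin β γ s_in α d
      = β * γ / muInv μmax qmin d *
          (α * (s_in - psiInv φmax ks ρmax kv μmax qmin β γ α d) / s_in) := Pyield_eq_mul ..
    _ < β * γ / muInv μmax qmin d :=
        mul_lt_of_lt_one_right (div_pos hβγ (hq.trans hqM)) (mul_sub_div_lt_one hα0.le hα1 hψ hs)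
    _ < β * γ / qmin := div_lt_div_of_pos_left hβγ hq hqM

/-- for `α ∈ (0,1)` and `d > 0` admissible with `ψα⁻¹(d) < s_in`,
the yield is strictly below the global supremum `β·γ/qmin`: the supremum is
approached only at the boundary point `(α,d) = (1,0)` and is not attained at
any admissible interior point. -/
theorem Pyield_lt_global_sup (φmax ks ρmax kv μmax qmin β γ s_in : ℝ)
    (hφ : 0 < φmax) (hks : 0 < ks) (hρ : 0 < ρmax) (hkv : 0 < kv)
    (hμ : 0 < μmax) (hq : 0 < qmin) (hβ : 0 < β) (hγ : 0 < γ) (hs : 0 < s_in)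
    (α : ℝ) (hα0 : 0 < α) (hα1 : α < 1)
    (d : ℝ) (hd : 0 < d)
    (hdom : inDom φmax ρmax μmax qmin α d)
    (hfeas : psiInv φmax ks ρmax kv μmax qmin β γ α d < s_in) :
    Pyield φmax ks ρmax kv μmax qmin β γ s_in α d < β * γ / qmin :=
  Pyield_lt_global_sup_general φmax ks ρmax kv μmax qmin β γ s_in hks hkv hq hβ hγ hs α hα0 hα1 d hd
    hdom
end

section
/- For each fixed dilution rate d with 0 < d < μmax and d·μ⁻¹(d) < ρmax, the bioreactor yield α ↦ P_yield(α,d) is strictly concave on the open interval (0, 1 − d/φmax): for all α₁ ≠ α₂ in this interval and all t ∈ (0,1), P_yield(t·α₁ + (1−t)·α₂, d) > t·P_yield(α₁,d) + (1−t)·P_yield(α₂,d). -/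
/-!
On `(0, 1 − d/φmax)` the vitamin term of `α·β·γ·ψα⁻¹(d)` no longer depends on `α`, so the
yield is an affine function of `α` minus a positive multiple of `α ↦ α/((φmax − d) − φmax·α)`.
That function is strictly convex below its pole, because
`a·g x + b·g y − g (a x + b y) = a b c p (x − y)² / (D x · D y · D (a x + b y))` for
`g x = x / D x`, `D x = c − p x` and `a + b = 1`.
-/

open Set

lemma strictConvexOn_div_sub_mul {p c : ℝ} (hp : 0 < p) (hc : 0 < c) :
    StrictConvexOn ℝ (Iio (c / p)) fun x => x / (c - p * x) := by
  refine ⟨convex_Iio _, fun x hx y hy hxy a b ha hb hab => ?_⟩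
  have hpos : ∀ z, z < c / p → 0 < c - p * z := fun z hz => by
    rw [lt_div_iff₀ hp] at hz; linarith
  have hDx := hpos x hx
  have hDy := hpos y hy
  have hDz : 0 < c - p * (a * x + b * y) := by
    have : c - p * (a * x + b * y) = a * (c - p * x) + b * (c - p * y) := by
      linear_combination c * hab.symm
    rw [this]; positivity
  have hgap : a * (x / (c - p * x)) + b * (y / (c - p * y))
        - (a * x + b * y) / (c - p * (a * x + b * y))
      = a * b * c * p * (x - y) ^ 2 / ((c - p * x) * (c - p * y) * (c - p * (a * x + b * y))) := by
    obtain rfl : b = 1 - a := by linarith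
    rw [eq_div_iff (by positivity)]
    linear_combination
      (a * (c - p * y) * (c - p * (a * x + (1 - a) * y))) * div_mul_cancel₀ x hDx.ne'
      + ((1 - a) * (c - p * x) * (c - p * (a * x + (1 - a) * y))) * div_mul_cancel₀ y hDy.ne'
      - ((c - p * x) * (c - p * y)) * div_mul_cancel₀ (a * x + (1 - a) * y) hDz.ne'
  have hxy₀ : x - y ≠ 0 := sub_ne_zero.2 hxy
  have : 0 < a * b * c * p * (x - y) ^ 2 /
      ((c - p * x) * (c - p * y) * (c - p * (a * x + b * y))) := by positivity
  simp only [smul_eq_mul]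
  linarith

lemma StrictConvexOn.strictConcaveOn_affine_sub_mul {s : Set ℝ} {g : ℝ → ℝ}
    (hg : StrictConvexOn ℝ s g) (a b : ℝ) {k : ℝ} (hk : 0 < k) :
    StrictConcaveOn ℝ s fun x => a * x + b - k * g x := by
  refine ⟨hg.1, fun x hx y hy hxy u v hu hv huv => ?_⟩
  have hgap := mul_lt_mul_of_pos_left (hg.2 hx hy hxy hu hv huv) hk
  simp only [smul_eq_mul] at hgap ⊢
  linear_combination hgap + b * huv

lemma Pyield_eq_affine_sub (φmax ks ρmax kv μmax qmin β γ s_in α d : ℝ)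
    (hβ : β ≠ 0) (hγ : γ ≠ 0) (hs : s_in ≠ 0) (hM : muInv μmax qmin d ≠ 0)
    (hα : α ≠ 0) (h1α : 1 - α ≠ 0) (hD : φmax - d - φmax * α ≠ 0) :
    Pyield φmax ks ρmax kv μmax qmin β γ s_in α d =
      β * γ / muInv μmax qmin d * α
        + -(rhoInv ρmax kv (d * muInv μmax qmin d) / (s_in * muInv μmax qmin d))
        - β * γ * ks * d / (s_in * muInv μmax qmin d) * (α / (φmax - d - φmax * α)) := by
  have hφα : φmax - d / (1 - α) ≠ 0 := by
    rw [sub_div' h1α]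
    exact div_ne_zero (fun h => hD (by linear_combination h)) h1α
  unfold Pyield psiInv phiInv
  field_simp
  ring

lemma Pyield_strictConcaveOn (φmax ks ρmax kv μmax qmin β γ s_in d : ℝ)
    (hφ : 0 < φmax) (hks : 0 < ks) (hμ : 0 < μmax) (hq : 0 < qmin) (hβ : 0 < β) (hγ : 0 < γ)
    (hs : 0 < s_in) (hd0 : 0 < d) (hdμ : d < μmax) (hdφ : d < φmax) :
    StrictConcaveOn ℝ (Ioo 0 (1 - d / φmax))
      fun α => Pyield φmax ks ρmax kv μmax qmin β γ s_in α d := by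
  have hM : 0 < muInv μmax qmin d := div_pos (mul_pos hq hμ) (sub_pos.2 hdμ)
  have hsub : Ioo 0 (1 - d / φmax) ⊆ Iio ((φmax - d) / φmax) := by
    rw [sub_div, div_self hφ.ne']
    exact Ioo_subset_Iio_self
  refine (((strictConvexOn_div_sub_mul hφ (sub_pos.2 hdφ)).subset hsub (convex_Ioo _ _)
    ).strictConcaveOn_affine_sub_mul (β * γ / muInv μmax qmin d)
      (-(rhoInv ρmax kv (d * muInv μmax qmin d) / (s_in * muInv μmax qmin d)))
      (k := β * γ * ks * d / (s_in * muInv μmax qmin d)) (by positivity)).congr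
      fun α ⟨hα0, hα1⟩ => ?_
  have hD : 0 < φmax - d - φmax * α := by
    have : d / φmax < 1 - α := by linarith
    rw [div_lt_iff₀ hφ] at this
    linarith
  have h1α : 1 - α ≠ 0 := by
    intro h
    nlinarith
  exact (Pyield_eq_affine_sub φmax ks ρmax kv μmax qmin β γ s_in α d hβ.ne' hγ.ne' hs.ne' hM.ne'
    hα0.ne' h1α hD.ne').symm

theorem Pyield_strictConcave_in_alpha_general (φmax ks ρmax kv μmax qmin β γ s_in : ℝ)
    (hφ : 0 < φmax) (hks : 0 < ks)
    (hμ : 0 < μmax) (hq : 0 < qmin) (hβ : 0 < β) (hγ : 0 < γ) (hs : 0 < s_in)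
    (d : ℝ) (hd0 : 0 < d) (hdμ : d < μmax)
    (α₁ α₂ : ℝ) (h₁ : α₁ ∈ Set.Ioo (0 : ℝ) (1 - d / φmax))
    (h₂ : α₂ ∈ Set.Ioo (0 : ℝ) (1 - d / φmax)) (hne : α₁ ≠ α₂)
    (t : ℝ) (ht : t ∈ Set.Ioo (0 : ℝ) 1) :
    t * Pyield φmax ks ρmax kv μmax qmin β γ s_in α₁ d +
        (1 - t) * Pyield φmax ks ρmax kv μmax qmin β γ s_in α₂ d <
      Pyield φmax ks ρmax kv μmax qmin β γ s_in (t * α₁ + (1 - t) * α₂) d := by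
  have hdφ : d < φmax := (div_lt_one hφ).1 (by linarith [h₁.1, h₁.2])
  simpa only [smul_eq_mul] using
    (Pyield_strictConcaveOn φmax ks ρmax kv μmax qmin β γ s_in d hφ hks hμ hq hβ hγ hs hd0 hdμ
      hdφ).2 h₁ h₂ hne ht.1 (sub_pos.2 ht.2) (add_sub_cancel t 1)

/-- for fixed `0 < d < μmax` with `d·μ⁻¹(d) < ρmax`, the yield
`α ↦ P_yield(α,d)` is strictly concave on `(0, 1 − d/φmax)`. -/
theorem Pyield_strictConcave_in_alpha (φmax ks ρmax kv μmax qmin β γ s_in : ℝ)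
    (hφ : 0 < φmax) (hks : 0 < ks) (hρ : 0 < ρmax) (hkv : 0 < kv)
    (hμ : 0 < μmax) (hq : 0 < qmin) (hβ : 0 < β) (hγ : 0 < γ) (hs : 0 < s_in)
    (d : ℝ) (hd0 : 0 < d) (hdμ : d < μmax)
    (hdρ : d * muInv μmax qmin d < ρmax)
    (α₁ α₂ : ℝ) (h₁ : α₁ ∈ Set.Ioo (0 : ℝ) (1 - d / φmax))
    (h₂ : α₂ ∈ Set.Ioo (0 : ℝ) (1 - d / φmax)) (hne : α₁ ≠ α₂)
    (t : ℝ) (ht : t ∈ Set.Ioo (0 : ℝ) 1) :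
    t * Pyield φmax ks ρmax kv μmax qmin β γ s_in α₁ d +
        (1 - t) * Pyield φmax ks ρmax kv μmax qmin β γ s_in α₂ d <
      Pyield φmax ks ρmax kv μmax qmin β γ s_in (t * α₁ + (1 - t) * α₂) d :=
  Pyield_strictConcave_in_alpha_general φmax ks ρmax kv μmax qmin β γ s_in hφ hks hμ hq hβ hγ hs d
    hd0 hdμ α₁ α₂ h₁ h₂ hne t ht
end

section
/- Let Z ⊆ ℝⁿ be a convex set, let f₁,…,f_k : ℝⁿ → ℝ be functions each of which is quasiconcave on Z (i.e., f_i(t·x + (1−t)·y) ≥ min(f_i(x), f_i(y)) for all x, y ∈ Z and t ∈ [0,1]), and suppose at least one f_j is strictly quasiconcave on Z (i.e., f_j(t·x + (1−t)·y) > min(f_j(x), f_j(y)) for all x ≠ y in Z and t ∈ (0,1)). Then every locally Pareto optimal point z* ∈ Z for the problem of maximizing (f₁,…,f_k) over Z is globally Pareto optimal: if there exists δ > 0 such that no z ∈ Z with ‖z − z*‖ < δ satisfies f_i(z) ≥ f_i(z*) for all i with strict inequality for some i, then no z ∈ Z at all satisfies f_i(z) ≥ f_i(z*) for all i with strict inequality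 for some i. -/
open Set Filter Topology

/- Moving from a point `w` towards a point `z` that dominates it keeps every objective at least
its value at `w` (quasiconcavity) and strictly improves `f j` (strict quasiconcavity). Points
of the open segment arbitrarily close to `w` thus dominate `w`, so a dominating point anywhere
in the convex set yields one in every neighbourhood of `w`. -/

theorem objectives_lt_smul_add_one_sub_smul {ι 𝕜 E β : Type*} [Ring 𝕜] [PartialOrder 𝕜]
    [AddCommGroup E] [Module 𝕜 E] [LinearOrder β] {Z : Set E} {f : ι → E → β} {j : ι}
    (hquasi : ∀ i, ∀ x ∈ Z, ∀ y ∈ Z, ∀ t ∈ Icc (0 : 𝕜) 1,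
      min (f i x) (f i y) ≤ f i (t • x + (1 - t) • y))
    (hstrict : ∀ x ∈ Z, ∀ y ∈ Z, x ≠ y → ∀ t ∈ Ioo (0 : 𝕜) 1,
      min (f j x) (f j y) < f j (t • x + (1 - t) • y))
    {z w : E} (hz : z ∈ Z) (hw : w ∈ Z) (hne : z ≠ w) (hle : (fun i ↦ f i w) ≤ fun i ↦ f i z)
    {t : 𝕜} (ht : t ∈ Ioo 0 1) :
    (fun i ↦ f i w) < fun i ↦ f i (t • z + (1 - t) • w) := by
  refine Pi.lt_def.2 ⟨fun i ↦ ?_, j, ?_⟩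
  · simpa [min_eq_right (hle i)] using hquasi i z hz w hw t (Ioo_subset_Icc_self ht)
  · simpa [min_eq_right (hle j)] using hstrict z hz w hw hne t ht

theorem exists_mem_Ioo_smul_add_one_sub_smul_mem_nhds {E : Type*} [AddCommGroup E]
    [TopologicalSpace E] [Module ℝ E] [IsTopologicalAddGroup E] [ContinuousSMul ℝ E]
    (z : E) {w : E} {U : Set E} (hU : U ∈ 𝓝 w) :
    ∃ t ∈ Ioo (0 : ℝ) 1, t • z + (1 - t) • w ∈ U := by
  have hcont : Continuous fun t : ℝ ↦ t • z + (1 - t) • w := by fun_prop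
  have htendsto : Tendsto (fun t : ℝ ↦ t • z + (1 - t) • w) (𝓝[>] 0) (𝓝 w) :=
    (hcont.tendsto' 0 w (by simp)).mono_left nhdsWithin_le_nhds
  obtain ⟨t, htU, ht⟩ := ((htendsto.eventually hU).and (Ioo_mem_nhdsGT one_pos)).exists
  exact ⟨t, ht, htU⟩

/-- over a convex set `Z ⊆ ℝⁿ`, if each `fᵢ` is quasiconcave on `Z`
and at least one `f_j` is strictly quasiconcave on `Z`, then every locally Pareto
optimal point of the maximization of `(f₁,…,f_k)` over `Z` is globally Pareto
optimal. -/
theorem locally_pareto_implies_globally_pareto (n k : ℕ)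
    (Z : Set (EuclideanSpace ℝ (Fin n))) (hZ : Convex ℝ Z)
    (f : Fin k → EuclideanSpace ℝ (Fin n) → ℝ)
    (hquasi : ∀ i : Fin k, ∀ x ∈ Z, ∀ y ∈ Z, ∀ t ∈ Set.Icc (0 : ℝ) 1,
      min (f i x) (f i y) ≤ f i (t • x + (1 - t) • y))
    (j : Fin k)
    (hstrict : ∀ x ∈ Z, ∀ y ∈ Z, x ≠ y → ∀ t ∈ Set.Ioo (0 : ℝ) 1,
      min (f j x) (f j y) < f j (t • x + (1 - t) • y))
    (zstar : EuclideanSpace ℝ (Fin n)) (hzstar : zstar ∈ Z)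
    (hlocal : ∃ δ > (0 : ℝ), ¬ ∃ z ∈ Z, ‖z - zstar‖ < δ ∧
      (∀ i : Fin k, f i zstar ≤ f i z) ∧ (∃ i : Fin k, f i zstar < f i z)) :
    ¬ ∃ z ∈ Z, (∀ i : Fin k, f i zstar ≤ f i z) ∧
      (∃ i : Fin k, f i zstar < f i z) := by
  rintro ⟨z, hz, hle, i, hlt⟩
  obtain ⟨δ, hδ, hnone⟩ := hlocal
  have hne : z ≠ zstar := by
    rintro rfl
    exact hlt.false
  obtain ⟨t, ht, hclose⟩ :=
    exists_mem_Ioo_smul_add_one_sub_smul_mem_nhds z (Metric.ball_mem_nhds zstar hδ)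
  have hmem : t • z + (1 - t) • zstar ∈ Z :=
    hZ hz hzstar ht.1.le (sub_nonneg.2 ht.2.le) (add_sub_cancel t 1)
  exact hnone ⟨_, hmem, mem_ball_iff_norm.1 hclose,
    Pi.lt_def.1 (objectives_lt_smul_add_one_sub_smul hquasi hstrict hz hzstar hne hle ht)⟩
end

section
/- The microalgal productivity P_out is logarithmically concave on the admissible set U: the function (α,d) ↦ log P_out(α,d) is concave on U = {(α,d) ∈ (0,1)×(0,∞) : d is in the domain of ψα⁻¹ and ψα⁻¹(d) < s_in}. -/
/-- Microalgal productivity `P_out(α,d)`. -/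
noncomputable def Pout (φmax ks ρmax kv μmax qmin β γ s_in α d : ℝ) : ℝ :=
  α * β * γ * d * (s_in - psiInv φmax ks ρmax kv μmax qmin β γ α d) /
    muInv μmax qmin d

/-- Admissible set `U = {(α,d) ∈ (0,1)×(0,∞) : d ∈ dom ψα⁻¹, ψα⁻¹(d) < s_in}`. -/
def Uset (φmax ks ρmax kv μmax qmin β γ s_in : ℝ) : Set (ℝ × ℝ) :=
  {u : ℝ × ℝ | 0 < u.1 ∧ u.1 < 1 ∧ 0 < u.2 ∧
    inDom φmax ρmax μmax qmin u.1 u.2 ∧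
    psiInv φmax ks ρmax kv μmax qmin β γ u.1 u.2 < s_in}

/-!
On `U`, `P_out(α,d) = βγ/(qmin·μmax) · α · (μmax − d) · S(α,d)` where
`S(α,d) = d·(s_in − ψα⁻¹(d)) = s_in·d − ks·d²/(φmax(1−α) − d) − K·d²/(α(A − Bd))`
with `K = kv·qmin·μmax/(βγ)`, `A = ρmax·μmax`, `B = ρmax + qmin·μmax`.
The factors `α` and `μmax − d` are affine, and `S` is concave: both subtracted terms have the
form `f²/g` with `f ≥ 0` convex and `g > 0` concave (take `f = d`, `g = φmax(1−α) − d`, resp.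
`f = d/√(A − Bd)`, `g = α`), and such quotients are convex by the two-term Cauchy–Schwarz
inequality `(au + bv)²/(ap + bq) ≤ a·u²/p + b·v²/q`. So `log P_out` is a sum of logarithms of
positive concave functions, and `U = {S > 0}` inside a convex polygon is convex.
-/

open Set Real

section Convexity

variable {E : Type*} [AddCommGroup E] [Module ℝ E] {s : Set E} {f g : E → ℝ}

theorem ConcaveOn.comp_of_mapsTo {t : Set ℝ} {h : ℝ → ℝ} (hh : ConcaveOn ℝ t h)
    (hh' : MonotoneOn h t) (hf : ConcaveOn ℝ s f) (hst : MapsTo f s t) :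
    ConcaveOn ℝ s (h ∘ f) :=
  ⟨hf.1, fun _ hx _ hy _ _ ha hb hab =>
    (hh.2 (hst hx) (hst hy) ha hb hab).trans <|
      hh' (hh.1 (hst hx) (hst hy) ha hb hab) (hst (hf.1 hx hy ha hb hab)) (hf.2 hx hy ha hb hab)⟩

theorem ConcaveOn.log (hf : ConcaveOn ℝ s f) (hf₀ : ∀ x ∈ s, 0 < f x) :
    ConcaveOn ℝ s fun x => Real.log (f x) :=
  strictConcaveOn_log_Ioi.concaveOn.comp_of_mapsTo (strictMonoOn_log.monotoneOn) hf hf₀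

theorem ConcaveOn.sqrt (hf : ConcaveOn ℝ s f) (hf₀ : ∀ x ∈ s, 0 ≤ f x) :
    ConcaveOn ℝ s fun x => √(f x) :=
  strictConcaveOn_sqrt.concaveOn.comp_of_mapsTo (fun _ _ _ _ h => Real.sqrt_le_sqrt h) hf hf₀

theorem ConcaveOn.convexOn_inv (hf : ConcaveOn ℝ s f) (hf₀ : ∀ x ∈ s, 0 < f x) :
    ConvexOn ℝ s fun x => (f x)⁻¹ := by
  refine ⟨hf.1, fun x hx y hy a b ha hb hab => ?_⟩
  have hinv : ConvexOn ℝ (Ioi 0) fun t : ℝ => t⁻¹ := by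
    simpa using (convexOn_zpow (𝕜 := ℝ) (-1))
  calc (f (a • x + b • y))⁻¹ ≤ (a • f x + b • f y)⁻¹ :=
        inv_anti₀ ((convex_Ioi (0 : ℝ)) (hf₀ x hx) (hf₀ y hy) ha hb hab) (hf.2 hx hy ha hb hab)
    _ ≤ a • (f x)⁻¹ + b • (f y)⁻¹ := hinv.2 (hf₀ x hx) (hf₀ y hy) ha hb hab

theorem add_sq_div_add_le {a b u v p q : ℝ} (ha : 0 ≤ a) (hb : 0 ≤ b) (hp : 0 < p) (hq : 0 < q) :
    (a * u + b * v) ^ 2 / (a * p + b * q) ≤ a * (u ^ 2 / p) + b * (v ^ 2 / q) := by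
  rcases (add_nonneg (mul_nonneg ha hp.le) (mul_nonneg hb hq.le)).eq_or_lt with h | h
  · rw [← h, div_zero]; positivity
  rw [div_le_iff₀ h, mul_div_assoc', mul_div_assoc', div_add_div _ _ hp.ne' hq.ne',
    div_mul_eq_mul_div, le_div_iff₀ (mul_pos hp hq)]
  nlinarith [mul_nonneg (mul_nonneg ha hb) (sq_nonneg (u * q - v * p))]

theorem ConvexOn.sq_div (hf : ConvexOn ℝ s f) (hf₀ : ∀ x ∈ s, 0 ≤ f x) (hg : ConcaveOn ℝ s g)
    (hg₀ : ∀ x ∈ s, 0 < g x) : ConvexOn ℝ s fun x => f x ^ 2 / g x := by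
  refine ⟨hf.1, fun x hx y hy a b ha hb hab => ?_⟩
  simp only [smul_eq_mul] at *
  calc f (a • x + b • y) ^ 2 / g (a • x + b • y)
      ≤ (a * f x + b * f y) ^ 2 / (a * g x + b * g y) :=
        div_le_div₀ (sq_nonneg _)
          (pow_le_pow_left₀ (hf₀ _ (hf.1 hx hy ha hb hab)) (hf.2 hx hy ha hb hab) 2)
          ((convex_Ioi (0 : ℝ)) (hg₀ x hx) (hg₀ y hy) ha hb hab) (hg.2 hx hy ha hb hab)
    _ ≤ a * (f x ^ 2 / g x) + b * (f y ^ 2 / g y) := add_sq_div_add_le ha hb (hg₀ x hx) (hg₀ y hy)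

theorem ConvexOn.mul_inv_sqrt_sub {A B : ℝ} (hf : ConvexOn ℝ s f) (hf₀ : ∀ x ∈ s, 0 ≤ f x)
    (hB : 0 ≤ B) (hfA : ∀ x ∈ s, B * f x < A) :
    ConvexOn ℝ s fun x => f x * (√(A - B * f x))⁻¹ := by
  have hsqrt : ConcaveOn ℝ s fun x => √(A - B * f x) :=
    ((concaveOn_const A hf.1).sub (hf.smul hB)).sqrt fun x hx => (sub_pos.2 (hfA x hx)).le
  refine hf.mul (hsqrt.convexOn_inv fun x hx => sqrt_pos.2 (sub_pos.2 (hfA x hx))) hf₀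
    (fun x _ => inv_nonneg.2 (sqrt_nonneg _)) fun x hx y hy hxy => ?_
  by_contra! hyx
  refine hxy.not_ge (inv_anti₀ (sqrt_pos.2 (sub_pos.2 (hfA x hx))) (sqrt_le_sqrt ?_))
  linarith [mul_le_mul_of_nonneg_left hyx.le hB]

end Convexity

section Model

variable (φmax ks ρmax kv μmax qmin β γ s_in : ℝ)

def psiDomain : Set (ℝ × ℝ) :=
  {u | 0 < u.1 ∧ u.1 < 1 ∧ 0 < u.2 ∧ u.2 < φmax * (1 - u.1) ∧ u.2 < μmax ∧
    (ρmax + qmin * μmax) * u.2 < ρmax * μmax}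

noncomputable def surplus (u : ℝ × ℝ) : ℝ :=
  s_in * u.2 - ks * (u.2 ^ 2 / (φmax * (1 - u.1) - u.2)) -
    kv * qmin * μmax / (β * γ) * (u.2 ^ 2 / (u.1 * (ρmax * μmax - (ρmax + qmin * μmax) * u.2)))

theorem convex_psiDomain : Convex ℝ (psiDomain φmax ρmax μmax qmin) := by
  rintro ⟨α₁, d₁⟩ ⟨h₁, h₂, h₃, h₄, h₅, h₆⟩ ⟨α₂, d₂⟩ ⟨k₁, k₂, k₃, k₄, k₅, k₆⟩ a b ha hb hab
  have pos : ∀ {p q : ℝ}, 0 < p → 0 < q → 0 < a * p + b * q :=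
    fun hp hq => (convex_Ioi (0 : ℝ)) hp hq ha hb hab
  obtain rfl : b = 1 - a := by linarith
  simp only [psiDomain, mem_ofPred_eq, Prod.smul_mk, Prod.mk_add_mk, smul_eq_mul]
  refine ⟨pos h₁ k₁, ?_, pos h₃ k₃, ?_, ?_, ?_⟩
  · linarith [pos (sub_pos.2 h₂) (sub_pos.2 k₂)]
  · linarith [pos (sub_pos.2 h₄) (sub_pos.2 k₄)]
  · linarith [pos (sub_pos.2 h₅) (sub_pos.2 k₅)]
  · linarith [pos (sub_pos.2 h₆) (sub_pos.2 k₆)]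

variable {φmax ks ρmax kv μmax qmin β γ s_in}

theorem surplus_eq_mul_sub_psiInv (hβ : β ≠ 0) (hγ : γ ≠ 0) {u : ℝ × ℝ}
    (hu : u ∈ psiDomain φmax ρmax μmax qmin) :
    surplus φmax ks ρmax kv μmax qmin β γ s_in u =
      u.2 * (s_in - psiInv φmax ks ρmax kv μmax qmin β γ u.1 u.2) := by
  obtain ⟨h₁, h₂, -, h₄, h₅, h₆⟩ := hu
  have : 1 - u.1 ≠ 0 := by linarith
  have : μmax - u.2 ≠ 0 := by linarith
  have : φmax * (1 - u.1) - u.2 ≠ 0 := by linarith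
  have : ρmax * μmax - (ρmax + qmin * μmax) * u.2 ≠ 0 := by linarith
  have hφ : φmax - u.2 / (1 - u.1) = (φmax * (1 - u.1) - u.2) / (1 - u.1) := by
    field_simp
  have hρ : ρmax - u.2 * muInv μmax qmin u.2 =
      (ρmax * μmax - (ρmax + qmin * μmax) * u.2) / (μmax - u.2) := by
    unfold muInv; field_simp; ring
  unfold surplus psiInv phiInv rhoInv
  rw [hφ, hρ]
  unfold muInv
  field_simp
  ring

theorem mem_Uset_iff (hβ : β ≠ 0) (hγ : γ ≠ 0) (u : ℝ × ℝ) :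
    u ∈ Uset φmax ks ρmax kv μmax qmin β γ s_in ↔
      u ∈ psiDomain φmax ρmax μmax qmin ∧ 0 < surplus φmax ks ρmax kv μmax qmin β γ s_in u := by
  constructor
  · rintro ⟨h₁, h₂, h₃, ⟨h₄, h₅, h₆⟩, h₇⟩
    unfold muInv at h₆
    rw [mul_div_assoc', div_lt_iff₀ (sub_pos.2 h₅)] at h₆
    have hu : u ∈ psiDomain φmax ρmax μmax qmin :=
      ⟨h₁, h₂, h₃, (div_lt_iff₀ (sub_pos.2 h₂)).1 h₄, h₅, by linarith⟩
    exact ⟨hu, by rw [surplus_eq_mul_sub_psiInv hβ hγ hu]; exact mul_pos h₃ (sub_pos.2 h₇)⟩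
  · rintro ⟨hu, hS⟩
    rw [surplus_eq_mul_sub_psiInv hβ hγ hu] at hS
    obtain ⟨h₁, h₂, h₃, h₄, h₅, h₆⟩ := hu
    refine ⟨h₁, h₂, h₃, ⟨(div_lt_iff₀ (sub_pos.2 h₂)).2 h₄, h₅, ?_⟩,
      sub_pos.1 (pos_of_mul_pos_right hS h₃.le)⟩
    unfold muInv
    rw [mul_div_assoc', div_lt_iff₀ (sub_pos.2 h₅)]
    linarith

theorem Pout_eq_mul_surplus (hβ : β ≠ 0) (hγ : γ ≠ 0) {u : ℝ × ℝ}
    (hu : u ∈ psiDomain φmax ρmax μmax qmin) :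
    Pout φmax ks ρmax kv μmax qmin β γ s_in u.1 u.2 = β * γ / (qmin * μmax) *
      (u.1 * ((μmax - u.2) * surplus φmax ks ρmax kv μmax qmin β γ s_in u)) := by
  have : μmax - u.2 ≠ 0 := by linarith [hu.2.2.2.2.1]
  rw [surplus_eq_mul_sub_psiInv hβ hγ hu]
  unfold Pout muInv
  field_simp

theorem concaveOn_surplus (hks : 0 ≤ ks) (hK : 0 ≤ kv * qmin * μmax / (β * γ))
    (hB : 0 ≤ ρmax + qmin * μmax) :
    ConcaveOn ℝ (psiDomain φmax ρmax μmax qmin) (surplus φmax ks ρmax kv μmax qmin β γ s_in) := by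
  have hD := convex_psiDomain φmax ρmax μmax qmin
  have hd : ConvexOn ℝ (psiDomain φmax ρmax μmax qmin) fun u => u.2 := by
    simpa using (LinearMap.snd ℝ ℝ ℝ).convexOn hD
  have hα : ConcaveOn ℝ (psiDomain φmax ρmax μmax qmin) fun u => u.1 := by
    simpa using (LinearMap.fst ℝ ℝ ℝ).concaveOn hD
  have hd₀ : ∀ u ∈ psiDomain φmax ρmax μmax qmin, 0 ≤ u.2 := fun u hu => hu.2.2.1.le
  have hφ : ConcaveOn ℝ (psiDomain φmax ρmax μmax qmin) fun u => φmax * (1 - u.1) - u.2 :=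
    ((concaveOn_const φmax hD).sub
      ((φmax • LinearMap.fst ℝ ℝ ℝ + LinearMap.snd ℝ ℝ ℝ).convexOn hD)).congr
      fun u _ => by
        simp only [Pi.sub_apply, LinearMap.add_apply, LinearMap.smul_apply, LinearMap.fst_apply,
          LinearMap.snd_apply, smul_eq_mul]
        ring
  have hQ₁ := hd.sq_div hd₀ hφ fun u hu => sub_pos.2 hu.2.2.2.1
  have hQ₂ := (hd.mul_inv_sqrt_sub hd₀ hB fun u hu => hu.2.2.2.2.2).sq_div
    (fun u hu => mul_nonneg (hd₀ u hu) (inv_nonneg.2 (sqrt_nonneg _))) hα fun u hu => hu.1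
  refine ((((s_in • LinearMap.snd ℝ ℝ ℝ).concaveOn hD).sub (hQ₁.smul hks)).sub
    (hQ₂.smul hK)).congr fun u hu => ?_
  have ht : 0 ≤ ρmax * μmax - (ρmax + qmin * μmax) * u.2 := by linarith [hu.2.2.2.2.2]
  simp only [surplus, Pi.sub_apply, LinearMap.smul_apply, LinearMap.snd_apply, smul_eq_mul,
    mul_pow, inv_pow, sq_sqrt ht, div_mul_eq_div_div_swap]
  ring

end Model

theorem log_Pout_concave_general (φmax ks ρmax kv μmax qmin β γ s_in : ℝ)
    (hks : 0 < ks) (hρ : 0 < ρmax) (hkv : 0 < kv)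
    (hμ : 0 < μmax) (hq : 0 < qmin) (hβ : 0 < β) (hγ : 0 < γ) :
    ConcaveOn ℝ (Uset φmax ks ρmax kv μmax qmin β γ s_in)
      (fun u : ℝ × ℝ =>
        Real.log (Pout φmax ks ρmax kv μmax qmin β γ s_in u.1 u.2)) := by
  have hU : Uset φmax ks ρmax kv μmax qmin β γ s_in = {u ∈ psiDomain φmax ρmax μmax qmin |
      0 < surplus φmax ks ρmax kv μmax qmin β γ s_in u} :=
    Set.ext (mem_Uset_iff hβ.ne' hγ.ne')
  have hS : ConcaveOn ℝ (psiDomain φmax ρmax μmax qmin)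
      (surplus φmax ks ρmax kv μmax qmin β γ s_in) :=
    concaveOn_surplus hks.le (by positivity) (by positivity)
  have hV := hS.convex_gt 0
  rw [hU]
  have hlogα : ConcaveOn ℝ _ fun u : ℝ × ℝ => log u.1 :=
    ((LinearMap.fst ℝ ℝ ℝ).concaveOn hV).log fun u hu => hu.1.1
  have hlogμ : ConcaveOn ℝ _ fun u : ℝ × ℝ => log (μmax - u.2) :=
    ((concaveOn_const μmax hV).sub ((LinearMap.snd ℝ ℝ ℝ).convexOn hV)).log
      fun u hu => sub_pos.2 hu.1.2.2.2.2.1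
  have hlogS := (hS.subset (sep_subset _ _) hV).log fun u hu => hu.2
  refine ((((concaveOn_const (log (β * γ / (qmin * μmax))) hV).add hlogα).add hlogμ).add
    hlogS).congr fun u hu => ?_
  obtain ⟨hu, hSu⟩ := hu
  have hμd : 0 < μmax - u.2 := sub_pos.2 hu.2.2.2.2.1
  rw [Pout_eq_mul_surplus hβ.ne' hγ.ne' hu,
    log_mul (by positivity) (mul_pos hu.1 (mul_pos hμd hSu)).ne',
    log_mul hu.1.ne' (mul_pos hμd hSu).ne', log_mul hμd.ne' hSu.ne']
  simp only [Pi.add_apply, add_assoc]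

/-- `P_out` is logarithmically concave on `U`, i.e.
`(α,d) ↦ log P_out(α,d)` is concave on `U`. -/
theorem log_Pout_concave (φmax ks ρmax kv μmax qmin β γ s_in : ℝ)
    (hφ : 0 < φmax) (hks : 0 < ks) (hρ : 0 < ρmax) (hkv : 0 < kv)
    (hμ : 0 < μmax) (hq : 0 < qmin) (hβ : 0 < β) (hγ : 0 < γ) (hs : 0 < s_in) :
    ConcaveOn ℝ (Uset φmax ks ρmax kv μmax qmin β γ s_in)
      (fun u : ℝ × ℝ =>
        Real.log (Pout φmax ks ρmax kv μmax qmin β γ s_in u.1 u.2)) :=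
  log_Pout_concave_general φmax ks ρmax kv μmax qmin β γ s_in hks hρ hkv hμ hq hβ hγ
end

section
/- Fix α ∈ (0,1), a dilution rate d > 0 in the domain of ψα⁻¹, and s_in > 0, and define s* = φ⁻¹(d/(1−α)), e* = (1−α)·γ·(s_in − s*), v* = ρ⁻¹(d·μ⁻¹(d)), q* = μ⁻¹(d), and c* = (α·β·γ·(s_in − s*) − v*)/q*. Then (s*, e*, v*, q*, c*) is an equilibrium of the consortium dynamics: −(1/γ)·φ(s*)·e* + d·(s_in − s*) = 0, (1−α)·φ(s*)·e* − d·e* = 0, α·β·φ(s*)·e* − ρ(v*)·c* − d·v* = 0, ρ(v*) − μ(q*)·q* = 0, and μ(q*)·c* − d·c* = 0. -/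
/-- Monod bacterial growth rate `φ(s) = φmax·s/(ks + s)`. -/
noncomputable def phiRate (φmax ks s : ℝ) : ℝ := φmax * s / (ks + s)

/-- Vitamin uptake rate `ρ(v) = ρmax·v/(kv + v)`. -/
noncomputable def rhoRate (ρmax kv v : ℝ) : ℝ := ρmax * v / (kv + v)

/-- Droop algal growth rate `μ(q) = μmax·(1 − qmin/q)`. -/
noncomputable def muRate (μmax qmin q : ℝ) : ℝ := μmax * (1 - qmin / q)

/-!
Each of `φ⁻¹`, `μ⁻¹`, `ρ⁻¹` is a right inverse of the corresponding rate away from its pole,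
so at the coexistence point `φ(s*) = d/(1−α)`, `μ(q*) = d` and `ρ(v*) = d·q*`. With these
three rates the five right-hand sides vanish by direct algebra, the choice of `e*` balancing the
substrate and bacteria equations and that of `c*` (i.e. `c*·q* = αβγ(s_in − s*) − v*`) balancing
the vitamin equation.
-/

theorem monod_inv_right (m k y : ℝ) (hm : m ≠ 0) (hk : k ≠ 0) (hy : y ≠ m) :
    m * (k * y / (m - y)) / (k + k * y / (m - y)) = y := by
  have hmy : m - y ≠ 0 := sub_ne_zero.mpr hy.symm
  have hden : k + k * y / (m - y) = k * m / (m - y) := by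
    field_simp
    ring
  rw [hden]
  field_simp

theorem phiRate_phiInv (φmax ks y : ℝ) (hφ : φmax ≠ 0) (hks : ks ≠ 0) (hy : y ≠ φmax) :
    phiRate φmax ks (phiInv φmax ks y) = y :=
  monod_inv_right φmax ks y hφ hks hy

theorem rhoRate_rhoInv (ρmax kv w : ℝ) (hρ : ρmax ≠ 0) (hkv : kv ≠ 0) (hw : w ≠ ρmax) :
    rhoRate ρmax kv (rhoInv ρmax kv w) = w :=
  monod_inv_right ρmax kv w hρ hkv hw

theorem muInv_ne_zero (μmax qmin d : ℝ) (hμ : μmax ≠ 0) (hq : qmin ≠ 0) (hd : d ≠ μmax) :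
    muInv μmax qmin d ≠ 0 :=
  div_ne_zero (mul_ne_zero hq hμ) (sub_ne_zero.mpr hd.symm)

theorem muRate_muInv (μmax qmin d : ℝ) (hμ : μmax ≠ 0) (hq : qmin ≠ 0) (hd : d ≠ μmax) :
    muRate μmax qmin (muInv μmax qmin d) = d := by
  have hμd : μmax - d ≠ 0 := sub_ne_zero.mpr hd.symm
  unfold muRate muInv
  field_simp
  ring

theorem consortium_equilibrium_of_rates (α β γ d s_in s e v q c φs ρv μq : ℝ)
    (hα : α ≠ 1) (hγ : γ ≠ 0)
    (hφs : φs = d / (1 - α)) (hρv : ρv = d * q) (hμq : μq = d)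
    (he : e = (1 - α) * γ * (s_in - s)) (hc : c * q = α * β * γ * (s_in - s) - v) :
    -(1 / γ) * φs * e + d * (s_in - s) = 0 ∧
    (1 - α) * φs * e - d * e = 0 ∧
    α * β * φs * e - ρv * c - d * v = 0 ∧
    ρv - μq * q = 0 ∧
    μq * c - d * c = 0 := by
  have h1α : 1 - α ≠ 0 := sub_ne_zero.mpr hα.symm
  subst φs ρv μq e
  refine ⟨?_, ?_, ?_, ?_, ?_⟩
  · field_simp
    ring
  · field_simp
    ring
  · field_simp
    linear_combination (-d) * hc
  · ring
  · ring

theorem coexistence_equilibrium_general (φmax ks ρmax kv μmax qmin β γ : ℝ)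
    (hφ : 0 < φmax) (hks : 0 < ks) (hρ : 0 < ρmax) (hkv : 0 < kv)
    (hμ : 0 < μmax) (hq : 0 < qmin) (hγ : 0 < γ)
    (α : ℝ) (hα1 : α < 1)
    (d : ℝ) (hdom : inDom φmax ρmax μmax qmin α d)
    (s_in : ℝ)
    (sstar estar vstar qstar cstar : ℝ)
    (hsstar : sstar = phiInv φmax ks (d / (1 - α)))
    (hestar : estar = (1 - α) * γ * (s_in - sstar))
    (hvstar : vstar = rhoInv ρmax kv (d * muInv μmax qmin d))
    (hqstar : qstar = muInv μmax qmin d)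
    (hcstar : cstar = (α * β * γ * (s_in - sstar) - vstar) / qstar) :
    -(1 / γ) * phiRate φmax ks sstar * estar + d * (s_in - sstar) = 0 ∧
    (1 - α) * phiRate φmax ks sstar * estar - d * estar = 0 ∧
    α * β * phiRate φmax ks sstar * estar - rhoRate ρmax kv vstar * cstar -
      d * vstar = 0 ∧
    rhoRate ρmax kv vstar - muRate μmax qmin qstar * qstar = 0 ∧
    muRate μmax qmin qstar * cstar - d * cstar = 0 := by
  obtain ⟨hφd, hμd, hρd⟩ := hdom
  have hqstar0 : qstar ≠ 0 := hqstar ▸ muInv_ne_zero μmax qmin d hμ.ne' hq.ne' hμd.ne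
  have hφs : phiRate φmax ks sstar = d / (1 - α) :=
    hsstar ▸ phiRate_phiInv φmax ks _ hφ.ne' hks.ne' hφd.ne
  have hρv : rhoRate ρmax kv vstar = d * qstar := by
    rw [hvstar, hqstar]
    exact rhoRate_rhoInv ρmax kv _ hρ.ne' hkv.ne' hρd.ne
  have hμq : muRate μmax qmin qstar = d :=
    hqstar ▸ muRate_muInv μmax qmin d hμ.ne' hq.ne' hμd.ne
  have hc : cstar * qstar = α * β * γ * (s_in - sstar) - vstar :=
    hcstar ▸ div_mul_cancel₀ _ hqstar0
  exact consortium_equilibrium_of_rates α β γ d s_in sstar estar vstar qstar cstar _ _ _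
    hα1.ne hγ.ne' hφs hρv hμq hestar hc

/-- the coexistence point `(s*, e*, v*, q*, c*)` is an equilibrium
of the consortium dynamics. -/
theorem coexistence_equilibrium (φmax ks ρmax kv μmax qmin β γ : ℝ)
    (hφ : 0 < φmax) (hks : 0 < ks) (hρ : 0 < ρmax) (hkv : 0 < kv)
    (hμ : 0 < μmax) (hq : 0 < qmin) (hβ : 0 < β) (hγ : 0 < γ)
    (α : ℝ) (hα0 : 0 < α) (hα1 : α < 1)
    (d : ℝ) (hd : 0 < d) (hdom : inDom φmax ρmax μmax qmin α d)
    (s_in : ℝ) (hs : 0 < s_in)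
    (sstar estar vstar qstar cstar : ℝ)
    (hsstar : sstar = phiInv φmax ks (d / (1 - α)))
    (hestar : estar = (1 - α) * γ * (s_in - sstar))
    (hvstar : vstar = rhoInv ρmax kv (d * muInv μmax qmin d))
    (hqstar : qstar = muInv μmax qmin d)
    (hcstar : cstar = (α * β * γ * (s_in - sstar) - vstar) / qstar) :
    -(1 / γ) * phiRate φmax ks sstar * estar + d * (s_in - sstar) = 0 ∧
    (1 - α) * phiRate φmax ks sstar * estar - d * estar = 0 ∧
    α * β * phiRate φmax ks sstar * estar - rhoRate ρmax kv vstar * cstar -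
      d * vstar = 0 ∧
    rhoRate ρmax kv vstar - muRate μmax qmin qstar * qstar = 0 ∧
    muRate μmax qmin qstar * cstar - d * cstar = 0 :=
  coexistence_equilibrium_general φmax ks ρmax kv μmax qmin β γ hφ hks hρ hkv hμ hq hγ α hα1 d hdom
    s_in sstar estar vstar qstar cstar hsstar hestar hvstar hqstar hcstar
end
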